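/- Let δ > −1 be real, and let l, η, p be nonnegative integers. Then with n = l + 2p, b_n^{l,δ} := ∫₀¹ ρ^{l} (1−ρ²)^{η+δ} R_n^{l,δ}(ρ) ρ² (1−ρ²)^{−δ} dρ = (1/2) (−1)^p · Γ(η+1)/(p! Γ(η−p+1)) · Γ(δ+η+1) Γ(l+p+3/2) / Γ(δ+η+l+p+5/2); in particular b_n^{l,δ} = 0 when p > η. -/

import Mathlib

open Real MeasureTheory

noncomputable def genBinom (a : ℝ) (p : ℕ) : ℝ :=
  (∏ j ∈ Finset.range p, (a - j)) / (Nat.factorial p : ℝ)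

noncomputable def jacobiP (k : ℕ) (a b : ℝ) (x : ℝ) : ℝ :=
  ∑ j ∈ Finset.range (k + 1),
    genBinom ((k : ℝ) + a) (k - j) * genBinom ((k : ℝ) + b) j *
      ((x - 1) / 2) ^ j * ((x + 1) / 2) ^ (k - j)

/-- generalized Pochhammer symbol `(x)_α = Γ(x+α)/Γ(x)` -/
noncomputable def pochG (x α : ℝ) : ℝ := Real.Gamma (x + α) / Real.Gamma x

/-- integer-order Pochhammer symbol `(x)_k = x(x+1)⋯(x+k−1)` -/
noncomputable def pochN (x : ℝ) (k : ℕ) : ℝ := ∏ j ∈ Finset.range k, (x + j)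

/-- generalized 3D Zernike radial function `R_{l+2p}^{l,α}` -/
noncomputable def R3 (α : ℝ) (l p : ℕ) (ρ : ℝ) : ℝ :=
  ρ ^ l * (1 - ρ ^ 2) ^ α * jacobiP p α ((l : ℝ) + 1 / 2) (2 * ρ ^ 2 - 1)

/-- generalized 2D Zernike radial function `²R_{m+2p}^{m,α}` -/
noncomputable def R2 (α : ℝ) (m p : ℕ) (ρ : ℝ) : ℝ :=
  ρ ^ m * (1 - ρ ^ 2) ^ α * jacobiP p α (m : ℝ) (2 * ρ ^ 2 - 1)

/-- spherical Bessel function of real order `a` -/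
noncomputable def sphBessel (a : ℝ) (z : ℝ) : ℝ :=
  Real.sqrt π / 2 * (z / 2) ^ a *
    ∑' k : ℕ, (-(z ^ 2) / 4) ^ k / ((Nat.factorial k : ℝ) * Real.Gamma ((k : ℝ) + a + 3 / 2))

/-- Gegenbauer polynomial `C_n^λ` -/
noncomputable def gegenbauer (n : ℕ) (lam : ℝ) (x : ℝ) : ℝ :=
  ∑ k ∈ Finset.range (n / 2 + 1),
    (-1) ^ k * Real.Gamma (((n - k : ℕ) : ℝ) + lam) /
      (Real.Gamma lam * (Nat.factorial k : ℝ) * (Nat.factorial (n - 2 * k) : ℝ)) *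
      (2 * x) ^ (n - 2 * k)

/-- Legendre polynomial `P_l` -/
noncomputable def legendreFun (l : ℕ) (x : ℝ) : ℝ :=
  (1 / 2 ^ l) * ∑ k ∈ Finset.range (l + 1),
    ((Nat.choose l k : ℝ)) ^ 2 * (x - 1) ^ (l - k) * (x + 1) ^ k

/-- associated Legendre function `P_l^m` -/
noncomputable def assocLegendre (l m : ℕ) (x : ℝ) : ℝ :=
  (1 - x ^ 2) ^ ((m : ℝ) / 2) * iteratedDeriv m (legendreFun l) x

/-- spherical harmonic `Y_l^m`, evaluated at a (unit) vector `v ∈ ℝ³`: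
`cos θ = v 2`, `φ = arg (v 0 + i v 1)`. -/
noncomputable def sphHarm (l : ℕ) (m : ℤ) (v : EuclideanSpace ℝ (Fin 3)) : ℂ :=
  (-1 : ℂ) ^ m *
    (Real.sqrt ((2 * l + 1) / (4 * π) *
      (Nat.factorial (l - m.natAbs) : ℝ) / (Nat.factorial (l + m.natAbs) : ℝ)) : ℝ) *
    (assocLegendre l m.natAbs (v 2) : ℝ) *
    Complex.exp (Complex.I * m * (Complex.arg (v 0 + Complex.I * v 1) : ℝ))

/-- generalized 3D Zernike function `Z_{nl}^{m,α}` on ℝ³ -/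
noncomputable def Z3 (α : ℝ) (l p : ℕ) (m : ℤ) (ω : EuclideanSpace ℝ (Fin 3)) : ℂ :=
  (R3 α l p ‖ω‖ : ℝ) * sphHarm l m (‖ω‖⁻¹ • ω)

/-
Substituting `u = ρ²` turns the coefficient into
`½ ∫₀¹ u^(l+1/2) (1-u)^(η+δ) P_p^(δ,l+1/2)(2u-1) du`. Expanding the Jacobi polynomial in powers
of `u` and `1 - u`, every term is a Beta integral; after pulling out the Gamma factors, the
remaining alternating sum of Pochhammer products is a Chu–Vandermonde sum, evaluated by induction
on `p` with Pascal's rule: it equals `(-1)^p η (η-1) ⋯ (η-p+1) = (-1)^p Γ(η+1) / Γ(η-p+1)`.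
-/

open Finset

lemma pochN_succ_left (x : ℝ) (k : ℕ) : pochN x (k + 1) = x * pochN (x + 1) k := by
  simp only [pochN, prod_range_succ', Nat.cast_zero, add_zero, Nat.cast_succ, add_assoc,
    add_comm (1 : ℝ), mul_comm]

lemma pochN_succ_right (x : ℝ) (k : ℕ) : pochN x (k + 1) = pochN x k * (x + k) :=
  prod_range_succ _ _

lemma prod_range_sub_eq_pochN (a : ℝ) (k : ℕ) :
    ∏ i ∈ range k, (a - i) = pochN (a - k + 1) k := by
  rw [pochN, ← prod_range_reflect]
  refine prod_congr rfl fun i hi => ?_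
  rw [Nat.sub_sub, Nat.cast_sub (by simp at hi; omega)]
  push_cast
  ring

lemma Gamma_add_nat_eq_mul_pochN {x : ℝ} (hx : 0 < x) (k : ℕ) :
    Gamma (x + k) = Gamma x * pochN x k := by
  induction k with
  | zero => simp [pochN]
  | succ k ih =>
    rw [Nat.cast_succ, ← add_assoc, Gamma_add_one (by positivity), ih, pochN_succ_right]
    ring

lemma Gamma_sub_add_one_mul_prod_range {x : ℝ} {j : ℕ} (hx : 0 < x - j + 1) :
    Gamma (x - j + 1) * ∏ i ∈ range j, (x - i) = Gamma (x + 1) := by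
  rw [prod_range_sub_eq_pochN, ← Gamma_add_nat_eq_mul_pochN hx]
  ring_nf

lemma genBinom_mul_Gamma_sub_add_one {x : ℝ} {j : ℕ} (hx : 0 < x - j + 1) :
    genBinom x j * Gamma (x - j + 1) = Gamma (x + 1) / j.factorial := by
  rw [genBinom, ← Gamma_sub_add_one_mul_prod_range hx]
  ring

lemma Gamma_nat_sub_add_one_eq_zero {η p : ℕ} (h : η < p) : Gamma ((η : ℝ) - p + 1) = 0 :=
  (Gamma_eq_zero_iff _).mpr ⟨p - (η + 1), by push_cast [Nat.cast_sub h]; ring⟩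

lemma Gamma_div_Gamma_sub_add_one (η p : ℕ) :
    Gamma (η + 1) / Gamma ((η : ℝ) - p + 1) = ∏ i ∈ range p, ((η : ℝ) - i) := by
  rcases le_or_gt p η with hpη | hηp
  · have hpos : (0 : ℝ) < η - p + 1 := by
      have : (p : ℝ) ≤ η := by exact_mod_cast hpη
      linarith
    rw [← Gamma_sub_add_one_mul_prod_range hpos, mul_div_cancel_left₀ _ (Gamma_pos_of_pos hpos).ne']
  · rw [Gamma_nat_sub_add_one_eq_zero hηp, div_zero, eq_comm]
    exact prod_eq_zero (mem_range.mpr hηp) (sub_self _)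

-- Chu–Vandermonde in disguise: the left side is `(d + 1)_p · ₂F₁(-p, d + e + 1; d + 1; 1)`.
lemma sum_neg_one_pow_mul_choose_mul_pochN (p : ℕ) (d e : ℝ) :
    ∑ j ∈ range (p + 1),
        (-1) ^ j * (p.choose j : ℝ) * pochN (d + j + 1) (p - j) * pochN (d + e + 1) j
      = (-1) ^ p * ∏ i ∈ range p, (e - i) := by
  induction p generalizing d e with
  | zero => simp [pochN]
  | succ p ih =>
    set f : ℝ → ℝ → ℕ → ℕ → ℝ := fun d e j i => (-1) ^ j * pochN (d + j + 1) i * pochN (d + e + 1) j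
    have hrange (q : ℕ) (d e : ℝ) :
        ∑ j ∈ range (q + 1),
            (-1) ^ j * (q.choose j : ℝ) * pochN (d + j + 1) (q - j) * pochN (d + e + 1) j
          = ∑ ij ∈ antidiagonal q, (q.choose ij.1 : ℝ) * f d e ij.1 ij.2 := by
      rw [Nat.sum_antidiagonal_eq_sum_range_succ (fun j i => (q.choose j : ℝ) * f d e j i)]
      exact sum_congr rfl fun j _ => by ring
    have hstep : ∀ ij ∈ antidiagonal p,
        (p.choose ij.1 : ℝ) * f d e ij.1 (ij.2 + 1) + (p.choose ij.2 : ℝ) * f d e (ij.1 + 1) ij.2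
          = -e * ((p.choose ij.1 : ℝ) * f (d + 1) (e - 1) ij.1 ij.2) := by
      rintro ⟨j, i⟩ hji
      rw [HasAntidiagonal.mem_antidiagonal] at hji
      rw [← hji, Nat.choose_symm_add]
      simp only [f, pochN_succ_left (d + j + 1), pochN_succ_right (d + e + 1), Nat.cast_succ]
      ring_nf
    rw [hrange, sum_antidiagonal_choose_succ_mul, ← sum_add_distrib, sum_congr rfl hstep, ← mul_sum,
      ← hrange, ih, prod_range_succ']
    simp only [Nat.cast_succ, Nat.cast_zero, sub_add_eq_sub_sub_swap]
    ring

lemma ofReal_rpow_mul_one_sub_rpow {a b x : ℝ} (hx : x ∈ Set.Icc (0 : ℝ) 1) :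
    ((x ^ a * (1 - x) ^ b : ℝ) : ℂ)
      = (x : ℂ) ^ (((a + 1 : ℝ) : ℂ) - 1) * (1 - (x : ℂ)) ^ (((b + 1 : ℝ) : ℂ) - 1) := by
  have h1x : 0 ≤ 1 - x := sub_nonneg.mpr hx.2
  push_cast
  rw [add_sub_cancel_right, add_sub_cancel_right,
    Complex.ofReal_cpow hx.1, Complex.ofReal_cpow h1x, Complex.ofReal_sub, Complex.ofReal_one]

lemma intervalIntegrable_rpow_mul_one_sub_rpow {a b : ℝ} (ha : -1 < a) (hb : -1 < b) :
    IntervalIntegrable (fun x => x ^ a * (1 - x) ^ b) volume 0 1 := by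
  have hC := Complex.betaIntegral_convergent (u := ((a + 1 : ℝ) : ℂ)) (v := ((b + 1 : ℝ) : ℂ))
    (by simp; linarith) (by simp; linarith)
  have hR : IntervalIntegrable (fun x : ℝ => ((x ^ a * (1 - x) ^ b : ℝ) : ℂ)) volume 0 1 :=
    hC.congr fun x hx => (ofReal_rpow_mul_one_sub_rpow (Set.Ioc_subset_Icc_self
      (by rwa [Set.uIoc_of_le zero_le_one] at hx))).symm
  rw [intervalIntegrable_iff] at hR ⊢
  have hRe := hR.re
  simp only [RCLike.re_to_complex, Complex.ofReal_re] at hRe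
  exact hRe

lemma integral_rpow_mul_one_sub_rpow {a b : ℝ} (ha : -1 < a) (hb : -1 < b) :
    ∫ x in (0 : ℝ)..1, x ^ a * (1 - x) ^ b = Gamma (a + 1) * Gamma (b + 1) / Gamma (a + b + 2) := by
  have hC := Complex.Gamma_mul_Gamma_eq_betaIntegral
    (s := ((a + 1 : ℝ) : ℂ)) (t := ((b + 1 : ℝ) : ℂ))
    (by simp; linarith) (by simp; linarith)
  rw [Complex.betaIntegral, ← intervalIntegral.integral_congr fun x hx =>
      ofReal_rpow_mul_one_sub_rpow (by rwa [Set.uIcc_of_le zero_le_one] at hx),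
    intervalIntegral.integral_ofReal, ← Complex.ofReal_add, Complex.Gamma_ofReal,
    Complex.Gamma_ofReal, Complex.Gamma_ofReal] at hC
  have hpos : 0 < Gamma (a + 1 + (b + 1)) := Gamma_pos_of_pos (by linarith)
  rw [show a + b + 2 = a + 1 + (b + 1) by ring, eq_div_iff hpos.ne']
  exact_mod_cast (hC.trans (mul_comm _ _)).symm

lemma sq_image_Icc_zero_one : (fun x : ℝ => x ^ 2) '' Set.Icc 0 1 = Set.Icc 0 1 := by
  ext u
  constructor
  · rintro ⟨x, ⟨hx0, hx1⟩, rfl⟩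
    exact ⟨by positivity, pow_le_one₀ hx0 hx1⟩
  · rintro ⟨hu0, hu1⟩
    exact ⟨√u, ⟨sqrt_nonneg u, sqrt_le_one.mpr hu1⟩, sq_sqrt hu0⟩

lemma integral_mul_comp_sq (G : ℝ → ℝ) :
    ∫ x in (0 : ℝ)..1, x * G (x ^ 2) = 1 / 2 * ∫ u in (0 : ℝ)..1, G u := by
  have hcov := integral_image_eq_integral_abs_deriv_smul (measurableSet_Icc (a := (0 : ℝ)) (b := 1))
    (fun x _ => by simpa using (hasDerivAt_pow 2 x).hasDerivWithinAt)
    (fun x hx y hy h => (pow_left_inj₀ hx.1 hy.1 two_ne_zero).mp h) G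
  rw [sq_image_Icc_zero_one] at hcov
  simp only [intervalIntegral.integral_of_le zero_le_one, ← integral_Icc_eq_integral_Ioc, hcov,
    smul_eq_mul, ← integral_const_mul]
  refine setIntegral_congr_fun measurableSet_Icc fun x hx => ?_
  rw [abs_of_nonneg (by linarith [hx.1])]
  ring

lemma integral_rpow_mul_one_sub_rpow_mul_jacobiP {a b : ℝ} (ha : -1 < a) (hb : -1 < b)
    (k : ℕ) (α β : ℝ) :
    ∫ u in (0 : ℝ)..1, u ^ a * (1 - u) ^ b * jacobiP k α β (2 * u - 1)
      = ∑ j ∈ range (k + 1), genBinom (k + α) (k - j) * genBinom (k + β) j * (-1) ^ j *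
          (Gamma (a + (k - j : ℕ) + 1) * Gamma (b + j + 1) / Gamma (a + b + k + 2)) := by
  have hexpand : Set.EqOn (fun u => u ^ a * (1 - u) ^ b * jacobiP k α β (2 * u - 1))
      (fun u => ∑ j ∈ range (k + 1), genBinom (k + α) (k - j) * genBinom (k + β) j * (-1) ^ j *
        (u ^ (a + (k - j : ℕ)) * (1 - u) ^ (b + j))) (Set.uIoo 0 1) := by
    intro u hu
    rw [Set.uIoo_of_le zero_le_one] at hu
    have hu0 : u ≠ 0 := hu.1.ne'
    have hu1 : 1 - u ≠ 0 := (sub_pos.mpr hu.2).ne'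
    simp only [jacobiP, mul_sum]
    refine sum_congr rfl fun j _ => ?_
    rw [rpow_add_natCast hu0, rpow_add_natCast hu1,
      show (2 * u - 1 - 1) / 2 = -(1 - u) by ring, show (2 * u - 1 + 1) / 2 = u by ring, neg_pow]
    ring
  have ha' (n : ℕ) : -1 < a + n := lt_add_of_lt_of_nonneg ha n.cast_nonneg
  have hb' (n : ℕ) : -1 < b + n := lt_add_of_lt_of_nonneg hb n.cast_nonneg
  have hint (j : ℕ) :
      IntervalIntegrable (fun u => u ^ (a + (k - j : ℕ)) * (1 - u) ^ (b + j)) volume 0 1 :=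
    intervalIntegrable_rpow_mul_one_sub_rpow (ha' _) (hb' _)
  rw [intervalIntegral.integral_congr_uIoo hexpand,
    intervalIntegral.integral_finsetSum fun j _ => (hint j).const_mul _]
  refine sum_congr rfl fun j hj => ?_
  rw [intervalIntegral.integral_const_mul, integral_rpow_mul_one_sub_rpow (ha' _) (hb' _),
    Nat.cast_sub (Nat.lt_succ_iff.mp (mem_range.mp hj))]
  ring_nf

lemma genBinom_mul_Gamma_term_eq {δ : ℝ} (hδ : -1 < δ) (l η : ℕ) {p j : ℕ} (hjp : j ≤ p) :
    genBinom (p + δ) (p - j) * genBinom (p + ((l : ℝ) + 1 / 2)) j * (-1) ^ j *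
        (Gamma ((l : ℝ) + 1 / 2 + (p - j : ℕ) + 1) * Gamma ((η : ℝ) + δ + j + 1) /
          Gamma ((l : ℝ) + 1 / 2 + ((η : ℝ) + δ) + p + 2))
      = Gamma (δ + η + 1) * Gamma ((l : ℝ) + p + 3 / 2) /
            (Gamma (δ + (η : ℝ) + l + p + 5 / 2) * p.factorial) *
          ((-1) ^ j * (p.choose j : ℝ) * pochN (δ + j + 1) (p - j) * pochN (δ + η + 1) j) := by
  have hcast : ((p - j : ℕ) : ℝ) = p - j := Nat.cast_sub hjp
  have hδpart : genBinom (p + δ) (p - j) = pochN (δ + j + 1) (p - j) / (p - j).factorial := by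
    rw [genBinom, prod_range_sub_eq_pochN, hcast]
    ring_nf
  have hlpart : Gamma ((l : ℝ) + p + 3 / 2) = genBinom (p + ((l : ℝ) + 1 / 2)) j *
      Gamma ((l : ℝ) + 1 / 2 + (p - j : ℕ) + 1) * j.factorial := by
    have hpos : 0 < (p : ℝ) + ((l : ℝ) + 1 / 2) - j + 1 := by
      have : (j : ℝ) ≤ p := by exact_mod_cast hjp
      linarith [(Nat.cast_nonneg l : (0 : ℝ) ≤ _)]
    have h := genBinom_mul_Gamma_sub_add_one hpos
    rw [eq_div_iff (by positivity)] at h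
    rw [show (l : ℝ) + p + 3 / 2 = p + ((l : ℝ) + 1 / 2) + 1 by ring,
      show (l : ℝ) + 1 / 2 + (p - j : ℕ) + 1 = p + ((l : ℝ) + 1 / 2) - j + 1 by rw [hcast]; ring]
    exact h.symm
  have hηpart : Gamma ((η : ℝ) + δ + j + 1) = Gamma (δ + η + 1) * pochN (δ + η + 1) j := by
    rw [← Gamma_add_nat_eq_mul_pochN (by linarith [(Nat.cast_nonneg η : (0 : ℝ) ≤ _)])]
    ring_nf
  have hD : Gamma ((l : ℝ) + 1 / 2 + ((η : ℝ) + δ) + p + 2)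
      = Gamma (δ + (η : ℝ) + l + p + 5 / 2) := by
    ring_nf
  rw [hD, hηpart, Nat.cast_choose ℝ hjp, hδpart, hlpart]
  field_simp

lemma sum_genBinom_mul_Gamma_eq {δ : ℝ} (hδ : -1 < δ) (l η p : ℕ) :
    ∑ j ∈ range (p + 1), genBinom (p + δ) (p - j) * genBinom (p + ((l : ℝ) + 1 / 2)) j * (-1) ^ j *
        (Gamma ((l : ℝ) + 1 / 2 + (p - j : ℕ) + 1) * Gamma ((η : ℝ) + δ + j + 1) /
          Gamma ((l : ℝ) + 1 / 2 + ((η : ℝ) + δ) + p + 2))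
      = (-1) ^ p * (Gamma ((η : ℝ) + 1) / ((p.factorial : ℝ) * Gamma ((η : ℝ) - p + 1))) *
          (Gamma (δ + η + 1) * Gamma ((l : ℝ) + p + 3 / 2) /
            Gamma (δ + (η : ℝ) + l + p + 5 / 2)) := by
  rw [sum_congr rfl fun j hj =>
      genBinom_mul_Gamma_term_eq hδ l η (Nat.lt_succ_iff.mp (mem_range.mp hj)),
    ← mul_sum, sum_neg_one_pow_mul_choose_mul_pochN, ← Gamma_div_Gamma_sub_add_one]
  ring

lemma R3_moment_integrand_eq {ρ : ℝ} (hρ : ρ ∈ Set.Ioo (0 : ℝ) 1) (δ s : ℝ) (l p : ℕ) :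
    ρ ^ l * (1 - ρ ^ 2) ^ s * R3 δ l p ρ * ρ ^ 2 * (1 - ρ ^ 2) ^ (-δ)
      = ρ * ((ρ ^ 2) ^ ((l : ℝ) + 1 / 2) * (1 - ρ ^ 2) ^ s *
          jacobiP p δ ((l : ℝ) + 1 / 2) (2 * ρ ^ 2 - 1)) := by
  have hρ2 : 0 < 1 - ρ ^ 2 := by nlinarith [hρ.1, hρ.2]
  rw [R3, rpow_neg hρ2.le, rpow_add (pow_pos hρ.1 2), rpow_natCast, ← sqrt_eq_rpow,
    sqrt_sq hρ.1.le]
  field_simp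
  ring

-- Lean's `x / 0 = 0` together with `Gamma` vanishing at nonpositive integers realises the
-- convention `1 / Γ(η - p + 1) = 0` for `η < p`.
/-- the expansion coefficients
`b_n^{l,δ} = ∫₀¹ ρ^l (1−ρ²)^{η+δ} R_n^{l,δ}(ρ) ρ² (1−ρ²)^{−δ} dρ`, `n = l + 2p`;
`1/Γ(z) = 0` at nonpositive integers `z` (Mathlib's `Real.Gamma` vanishes there),
so in particular `b_n^{l,δ} = 0` when `p > η`. -/
theorem stmt19 (δ : ℝ) (hδ : -1 < δ) (l η p : ℕ) :
    (∫ ρ in (0:ℝ)..1, ρ ^ l * (1 - ρ ^ 2) ^ ((η : ℝ) + δ) * R3 δ l p ρ * ρ ^ 2 * (1 - ρ ^ 2) ^ (-δ)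
      = 1 / 2 * (-1) ^ p * (Real.Gamma ((η : ℝ) + 1) /
            ((Nat.factorial p : ℝ) * Real.Gamma ((η : ℝ) - p + 1))) *
          (Real.Gamma (δ + η + 1) * Real.Gamma ((l : ℝ) + p + 3 / 2) /
            Real.Gamma (δ + (η : ℝ) + l + p + 5 / 2)))
    ∧ (η < p →
        ∫ ρ in (0:ℝ)..1,
            ρ ^ l * (1 - ρ ^ 2) ^ ((η : ℝ) + δ) * R3 δ l p ρ * ρ ^ 2 * (1 - ρ ^ 2) ^ (-δ) = 0) := by
  have hmoment : ∫ ρ in (0:ℝ)..1,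
      ρ ^ l * (1 - ρ ^ 2) ^ ((η : ℝ) + δ) * R3 δ l p ρ * ρ ^ 2 * (1 - ρ ^ 2) ^ (-δ)
      = 1 / 2 * (-1) ^ p * (Gamma ((η : ℝ) + 1) / ((p.factorial : ℝ) * Gamma ((η : ℝ) - p + 1))) *
          (Gamma (δ + η + 1) * Gamma ((l : ℝ) + p + 3 / 2) /
            Gamma (δ + (η : ℝ) + l + p + 5 / 2)) := by
    have hl : -1 < (l : ℝ) + 1 / 2 := by linarith [(Nat.cast_nonneg l : (0 : ℝ) ≤ _)]
    have hηδ : -1 < (η : ℝ) + δ := lt_add_of_nonneg_of_lt η.cast_nonneg hδ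
    rw [intervalIntegral.integral_congr_uIoo fun ρ hρ =>
        R3_moment_integrand_eq (by rwa [Set.uIoo_of_le zero_le_one] at hρ) δ _ l p,
      integral_mul_comp_sq fun u => u ^ ((l : ℝ) + 1 / 2) * (1 - u) ^ ((η : ℝ) + δ) *
        jacobiP p δ ((l : ℝ) + 1 / 2) (2 * u - 1),
      integral_rpow_mul_one_sub_rpow_mul_jacobiP hl hηδ, sum_genBinom_mul_Gamma_eq hδ]
    ring
  refine ⟨hmoment, fun hηp => ?_⟩
  rw [hmoment, Gamma_nat_sub_add_one_eq_zero hηp, mul_zero, div_zero]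
  ring
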